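/- arXiv:1702.02547 — 2 statements merged into one kernel-verified Lean document; each statement's English description precedes it below -/
import Mathlib

section
/- Let x1, ..., x_{k-1} be distinct elements of [n] and b ∈ [n] \ {x1,...,x_{k-1}}. Let σ = (x_{k-1} z_{k-1})···(x1 z1) where each z_i ∈ [n] \ {x_i,...,x_{k-1}}. Then σ(b) = b if and only if z1, ..., z_{k-1} are all distinct from b. -/
/-!
If no `z i` equals `b`, every transposition fixes `b`. Otherwise, at the first `i` with `z i = b`
the point `b` is sent to `x i`, and from then on its image stays among the `x t` already passed:
a later transposition `(x j z j)` either fixes it or, when it equals `z j`, moves it to `x j`,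
because by injectivity it is never `x j` itself. Hence it never returns to `b ∉ range x`.
-/

open Equiv

namespace Equiv.Perm

variable {α : Type*} [DecidableEq α] {m : ℕ}

/-- `(x (m-1) z (m-1)) ⋯ (x 0 z 0)`, so `(x 0 z 0)` acts first. -/
def swapProd (x z : Fin m → α) : Perm α :=
  ((List.ofFn fun i => swap (x i) (z i)).reverse).prod

theorem swapProd_succ (x z : Fin (m + 1) → α) :
    swapProd x z =
      swap (x (Fin.last m)) (z (Fin.last m)) * swapProd (x ∘ Fin.castSucc) (z ∘ Fin.castSucc) := by
  rw [swapProd, List.ofFn_succ']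
  simp [swapProd]

theorem swapProd_apply_of_forall_ne {x z : Fin m → α} {b : α}
    (hx : ∀ i, x i ≠ b) (hz : ∀ i, z i ≠ b) : swapProd x z b = b := by
  have : swapProd x z ∈ MulAction.stabilizer (Perm α) b := by
    refine Subgroup.list_prod_mem _ fun σ hσ => ?_
    obtain ⟨i, rfl⟩ := List.mem_ofFn.mp (List.mem_reverse.mp hσ)
    exact swap_apply_of_ne_of_ne (hx i).symm (hz i).symm
  exact this

theorem swapProd_apply_mem_range {x z : Fin m → α} (hx : Function.Injective x) {b : α}
    (hb : b ∉ Set.range x) (hzb : ∃ i, z i = b) : swapProd x z b ∈ Set.range x := by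
  induction m with
  | zero => exact absurd hzb (by simp)
  | succ m ih =>
    have hlast : x (Fin.last m) ∈ Set.range x := ⟨_, rfl⟩
    have hb_init : b ∉ Set.range (x ∘ Fin.castSucc) := fun ⟨t, ht⟩ => hb ⟨t.castSucc, ht⟩
    rw [swapProd_succ, Perm.mul_apply]
    by_cases hinit : ∃ i, (z ∘ Fin.castSucc) i = b
    · obtain ⟨t, ht⟩ := ih (hx.comp (Fin.castSucc_injective m)) hb_init hinit
      rw [← ht]
      by_cases hzt : x t.castSucc = z (Fin.last m)
      · rw [Function.comp_apply, hzt, swap_apply_right]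
        exact hlast
      · have hxt : x t.castSucc ≠ x (Fin.last m) := fun h => (Fin.castSucc_lt_last t).ne (hx h)
        rw [Function.comp_apply, swap_apply_of_ne_of_ne hxt hzt]
        exact ⟨_, rfl⟩
    · push Not at hinit
      have hzl : z (Fin.last m) = b := by
        obtain ⟨i, hi⟩ := hzb
        induction i using Fin.lastCases with
        | last => exact hi
        | cast i => exact absurd hi (hinit i)
      rw [swapProd_apply_of_forall_ne (fun i h => hb_init ⟨i, h⟩) hinit, ← hzl, swap_apply_right]
      exact hlast

theorem swapProd_apply_eq_self_iff {x z : Fin m → α} (hx : Function.Injective x) {b : α}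
    (hb : b ∉ Set.range x) : swapProd x z b = b ↔ ∀ i, z i ≠ b := by
  refine ⟨fun hfix i hzi => hb ?_, swapProd_apply_of_forall_ne fun i h => hb ⟨i, h⟩⟩
  simpa [hfix] using swapProd_apply_mem_range hx hb ⟨i, hzi⟩

end Equiv.Perm

theorem stmt11_general (n m : ℕ) (x z : Fin m → Fin n) (hx : Function.Injective x)
    (b : Fin n) (hb : b ∉ Set.range x) :
    ((List.ofFn fun i => Equiv.swap (x i) (z i)).reverse).prod b = b
      ↔ ∀ i : Fin m, z i ≠ b :=
  Equiv.Perm.swapProd_apply_eq_self_iff hx hb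

/-- For distinct x1,...,x_{k-1}, b outside them, and
σ = (x_{k-1} z_{k-1})···(x1 z1) with z_i ∉ {x_i,...,x_{k-1}}:
σ(b) = b iff all z_i are distinct from b. -/
theorem stmt11 (n m : ℕ) (x z : Fin m → Fin n) (hx : Function.Injective x)
    (b : Fin n) (hb : b ∉ Set.range x)
    (hz : ∀ i j : Fin m, i ≤ j → z i ≠ x j) :
    ((List.ofFn fun i => Equiv.swap (x i) (z i)).reverse).prod b = b
      ↔ ∀ i : Fin m, z i ≠ b :=
  stmt11_general n m x z hx b hb
end

section
/- Let e = {x1,...,xs} and e' be s-element subsets of [n] with e ∩ e' = ∅, and let M be a perfect matching of the complete s-uniform hypergraph containing both e and e' (with x1 < ... < xs). Let σ = (x2 z2)···(xs zs) with z_i ∈ [n] \ {x1,...,x_i} for each i. Then e' ∈ σ·M if and only if z_i ∉ e' for all i = 2,...,s. -/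
/-!
Write σ = τ₂ ⋯ τₛ with τᵢ = (xᵢ zᵢ). Since zᵢ avoids x₁, …, xᵢ, every τⱼ with j > i fixes
xᵢ; hence every zᵢ lying outside e has the form σ(xⱼ), and x₁ is fixed by σ.
If no zᵢ lies in e', then σ fixes e' pointwise and σ·e' = e'. Conversely, if e' = σ(f) with
f ∈ M and zᵢ ∈ e', then zᵢ = σ(xⱼ) forces xⱼ ∈ f, so f = e; but then x₁ = σ(x₁) ∈ e',
contradicting e ∩ e' = ∅.
-/

open Equiv

theorem List.prod_apply_eq_self {α : Type*} {L : List (Equiv.Perm α)} {v : α}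
    (h : ∀ g ∈ L, g v = v) : L.prod v = v :=
  (MulAction.stabilizer (Equiv.Perm α) v).list_prod_mem h

section ProdMapSwap

variable {ι α : Type*} [DecidableEq α] (a b : ι → α)

theorem prod_map_swap_apply_of_forall_ne {L : List ι} {v : α}
    (h : ∀ i ∈ L, v ≠ a i ∧ v ≠ b i) : (L.map fun i => swap (a i) (b i)).prod v = v :=
  List.prod_apply_eq_self <| by
    simpa only [List.mem_map, forall_exists_index, and_imp, forall_apply_eq_imp_iff₂]
      using fun i hi => swap_apply_of_ne_of_ne (h i hi).1 (h i hi).2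

theorem exists_prod_map_swap_apply_eq (L : List ι)
    (hL : L.Pairwise fun i j => a j ≠ a i ∧ b j ≠ a i) {v : α}
    (hva : v ∉ L.map a) (hvb : v ∈ L.map b) :
    ∃ i ∈ L, (L.map fun i => swap (a i) (b i)).prod (a i) = v := by
  induction L with
  | nil => simp at hvb
  | cons k L ih =>
    rw [List.pairwise_cons] at hL
    simp only [List.map_cons, List.mem_cons, not_or] at hva hvb
    simp only [List.mem_cons, List.map_cons, List.prod_cons, Perm.mul_apply,
      exists_eq_or_imp]
    by_cases hvk : v = b k
    · left
      rw [prod_map_swap_apply_of_forall_ne a b fun i hi => hL.1 i hi |>.imp Ne.symm Ne.symm,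
        swap_apply_left, hvk]
    · obtain ⟨i, hi, hσi⟩ := ih hL.2 hva.2 (hvb.resolve_left hvk)
      exact Or.inr ⟨i, hi, by rw [hσi, swap_apply_of_ne_of_ne hva.1 hvk]⟩

end ProdMapSwap

theorem List.mem_drop_one_finRange {s : ℕ} {i : Fin s} :
    i ∈ (List.finRange s).drop 1 ↔ 1 ≤ (i : ℕ) := by
  cases s with
  | zero => exact i.elim0
  | succ s =>
    rw [List.finRange_succ, List.drop_succ_cons, List.drop_zero, List.mem_map]
    simp only [List.mem_finRange, true_and]
    rw [Fin.exists_succ_eq, ne_eq, Fin.ext_iff, Fin.val_zero, Nat.one_le_iff_ne_zero]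

section SwapProd

variable {n s : ℕ} (x z : Fin s → Fin n)

/-- With `Fin s` indexed from `0`, this is the paper's σ = (x₂ z₂)⋯(xₛ zₛ). -/
def swapProd : Perm (Fin n) :=
  (((List.finRange s).drop 1).map fun i => swap (x i) (z i)).prod

theorem swapProd_apply_of_forall_ne {v : Fin n}
    (h : ∀ i : Fin s, 1 ≤ (i : ℕ) → v ≠ x i ∧ v ≠ z i) : swapProd x z v = v :=
  prod_map_swap_apply_of_forall_ne x z fun i hi => h i (List.mem_drop_one_finRange.mp hi)

variable {x z}

theorem swapProd_apply_zero (hx : Function.Injective x)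
    (hz : ∀ i j : Fin s, 1 ≤ (i : ℕ) → j ≤ i → z i ≠ x j) (hs : 0 < s) :
    swapProd x z (x ⟨0, hs⟩) = x ⟨0, hs⟩ :=
  swapProd_apply_of_forall_ne x z fun k hk =>
    ⟨hx.ne (Fin.ne_of_val_ne (Nat.ne_of_lt hk)),
      (hz k _ hk (Fin.le_def.mpr (Nat.zero_le _))).symm⟩

theorem exists_swapProd_apply_eq (hx : Function.Injective x)
    (hz : ∀ i j : Fin s, 1 ≤ (i : ℕ) → j ≤ i → z i ≠ x j) {i : Fin s} (hi : 1 ≤ (i : ℕ))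
    (hzi : ∀ j, z i ≠ x j) : ∃ j, swapProd x z (x j) = z i := by
  have hpw : ((List.finRange s).drop 1).Pairwise fun i j => x j ≠ x i ∧ z j ≠ x i :=
    (List.pairwise_lt_finRange s).drop.imp_of_mem fun _ hj hij =>
      ⟨hx.ne hij.ne', hz _ _ (List.mem_drop_one_finRange.mp hj) hij.le⟩
  obtain ⟨j, -, hj⟩ := exists_prod_map_swap_apply_eq x z _ hpw
    (fun hmem => by
      obtain ⟨k, -, hk⟩ := List.mem_map.mp hmem
      exact hzi k hk.symm)
    (List.mem_map_of_mem (List.mem_drop_one_finRange.mpr hi))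
  exact ⟨j, hj⟩

end SwapProd

theorem stmt18_general (n s : ℕ) (M : Finset (Finset (Fin n)))
    (hMcov : ∀ v : Fin n, ∃! f, f ∈ M ∧ v ∈ f)
    (x : Fin s → Fin n) (hx : StrictMono x)
    (e' : Finset (Fin n))
    (he : Finset.image x Finset.univ ∈ M) (he' : e' ∈ M)
    (hdisj : Disjoint (Finset.image x Finset.univ) e')
    (z : Fin s → Fin n)
    (hz : ∀ i j : Fin s, 1 ≤ (i : ℕ) → j ≤ i → z i ≠ x j) :
    (e' ∈ M.image fun f =>
        f.image ⇑((((List.finRange s).drop 1).map fun i => Equiv.swap (x i) (z i)).prod))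
    ↔ ∀ i : Fin s, 1 ≤ (i : ℕ) → z i ∉ e' := by
  change e' ∈ M.image (Finset.image (swapProd x z)) ↔ _
  have hxe : ∀ j, x j ∈ Finset.image x Finset.univ := fun j =>
    Finset.mem_image_of_mem x (Finset.mem_univ j)
  have hxe' : ∀ v ∈ e', ∀ j, v ≠ x j := fun v hv j hvj =>
    Finset.disjoint_left.mp hdisj (hxe j) (hvj ▸ hv)
  constructor
  · rintro hmem i hi hzi
    obtain ⟨f, hf, rfl⟩ := Finset.mem_image.mp hmem
    obtain ⟨j, hj⟩ := exists_swapProd_apply_eq hx.injective hz hi (hxe' _ hzi)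
    obtain ⟨u, hu, hσu⟩ := Finset.mem_image.mp hzi
    have hxf : x j ∈ f := (swapProd x z).injective (hσu.trans hj.symm) ▸ hu
    have hfe : f = Finset.image x Finset.univ := (hMcov (x j)).unique ⟨hf, hxf⟩ ⟨he, hxe j⟩
    have hx0 := swapProd_apply_zero hx.injective hz i.pos
    exact hxe' _ (Finset.mem_image.mpr ⟨_, hfe ▸ hxe _, hx0⟩) _ rfl
  · intro h
    refine Finset.mem_image.mpr ⟨e', he', ?_⟩
    conv_rhs => rw [← Finset.image_id (s := e')]
    exact Finset.image_congr fun v hv => swapProd_apply_of_forall_ne x z fun k hk =>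
      ⟨hxe' v hv k, fun hvz => h k hk (hvz ▸ hv)⟩

/-- For a perfect matching M of the complete s-uniform hypergraph on [n]
containing disjoint edges e = {x1 < ... < xs} and e', and
σ = (x2 z2)···(xs zs) with z_i ∉ {x1,...,x_i}: e' ∈ σ·M iff z_i ∉ e' for all
i = 2,...,s. -/
theorem stmt18 (n s : ℕ) (M : Finset (Finset (Fin n)))
    (hMs : ∀ f ∈ M, f.card = s)
    (hMcov : ∀ v : Fin n, ∃! f, f ∈ M ∧ v ∈ f)
    (x : Fin s → Fin n) (hx : StrictMono x)
    (e' : Finset (Fin n))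
    (he : Finset.image x Finset.univ ∈ M) (he' : e' ∈ M)
    (hdisj : Disjoint (Finset.image x Finset.univ) e')
    (z : Fin s → Fin n)
    (hz : ∀ i j : Fin s, 1 ≤ (i : ℕ) → j ≤ i → z i ≠ x j) :
    (e' ∈ M.image fun f =>
        f.image ⇑((((List.finRange s).drop 1).map fun i => Equiv.swap (x i) (z i)).prod))
    ↔ ∀ i : Fin s, 1 ≤ (i : ℕ) → z i ∉ e' :=
  stmt18_general n s M hMcov x hx e' he he' hdisj z hz
end
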